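/- Assume Σ_ℓ(0) is integral and let u ∈ X^∨. Then the set {z ∈ Hom_ℝ(X_ℝ, ℝ) : D_ℓ(x) + z(x) ≥ E_ℓ(u) + z(2ℓφ(u)) for all x ∈ X} equals the single point {−u} (where −u acts on X_ℝ by ℝ-linear extension). Equivalently, the cone τ := {(x₀, z) ∈ ℝ_{≥0} × Hom_ℝ(X_ℝ, ℝ) : (D_ℓ(y) − E_ℓ(u))·x₀ + z(y − 2ℓφ(u)) ≥ 0 for all y ∈ X} is the ray ℝ_{≥0}·(1, −u). -/

import Mathlib

/-!
Write `q(x) = B̄(x, x)`. Since `B̄(φ(z), x) = N z(x)`, one has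
`q(x − 2ℓφ(z)) = q(x) + 4ℓN (E_ℓ(z) − z(x))`. With `E_ℓ(−w) = E_ℓ(w)` this shows that the lattice
points of `Σ_ℓ(0)` lie in `Σ_ℓ`, and that `z ↦ E_ℓ(z) − z(x)` is bounded below on `X^∨`. At a
minimiser `z` the point `γ = x − 2ℓφ(z)` lies in `Σ_ℓ`, because
`E_ℓ(z − w) = E_ℓ(z) + E_ℓ(w) − 2ℓ w(φ(z))`. For `w = u` the same identity turns the inequality
`E_ℓ(z − u) + (z − u)(γ) ≥ 0` into `D_ℓ(x) − u(x) ≥ E_ℓ(u) − u(2ℓφ(u))`, so `−u` is in the set.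
Conversely, testing a member `z` at `x = γ + 2ℓφ(u)` gives `z(γ) ≥ −u(γ)` on `Σ_ℓ`, hence equality
since `Σ_ℓ = −Σ_ℓ`; integrality puts a ℤ-basis of `X` in `Σ_ℓ(0) ∩ X ⊆ Σ_ℓ`, so `z = −u`.
-/

open scoped BigOperators Pointwise

namespace NFC

/-- The coordinatewise embedding of the lattice `X = ℤ^g` into `X_ℝ = ℝ^g`. -/
def iota {g : ℕ} (x : Fin g → ℤ) : Fin g → ℝ := fun i => (x i : ℝ)

/-- The ℝ-linear extension of an integral linear functional `u ∈ X^∨` to `X_ℝ`. -/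
noncomputable def extd {g : ℕ} (u : (Fin g → ℤ) →ₗ[ℤ] ℤ) (x : Fin g → ℝ) : ℝ :=
  ∑ i, (u (Pi.single i 1) : ℝ) * x i

/-- `E_ℓ(u) = ℓ · u(φ(u))`. -/
def El {g : ℕ} {Y : Submodule ℤ (Fin g → ℤ)}
    (φ : ((Fin g → ℤ) →ₗ[ℤ] ℤ) → Y) (ℓ : ℕ) (u : (Fin g → ℤ) →ₗ[ℤ] ℤ) : ℤ :=
  (ℓ : ℤ) * u (φ u : Fin g → ℤ)

/-- `Σ_ℓ = {α ∈ X : E_ℓ(u) + u(α) ≥ 0 for all u ∈ X^∨}`. -/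
def SigmaL {g : ℕ} {Y : Submodule ℤ (Fin g → ℤ)}
    (φ : ((Fin g → ℤ) →ₗ[ℤ] ℤ) → Y) (ℓ : ℕ) : Set (Fin g → ℤ) :=
  {α | ∀ u : (Fin g → ℤ) →ₗ[ℤ] ℤ, 0 ≤ El φ ℓ u + u α}

/-- The Voronoi polytope `Σ_ℓ(c)`, defined w.r.t. the norm `‖z‖ = √(B̄(z,z))`. -/
noncomputable def VorP {g : ℕ} {Y : Submodule ℤ (Fin g → ℤ)}
    (Bb : (Fin g → ℝ) →ₗ[ℝ] (Fin g → ℝ) →ₗ[ℝ] ℝ)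
    (φ : ((Fin g → ℤ) →ₗ[ℤ] ℤ) → Y) (ℓ : ℕ)
    (c : (Fin g → ℤ) →ₗ[ℤ] ℤ) : Set (Fin g → ℝ) :=
  {x | ∀ u : (Fin g → ℤ) →ₗ[ℤ] ℤ,
    Real.sqrt (Bb (x - iota ((2 * (ℓ : ℤ)) • ((φ c : Fin g → ℤ))))
               (x - iota ((2 * (ℓ : ℤ)) • ((φ c : Fin g → ℤ))))) ≤
    Real.sqrt (Bb (x - iota ((2 * (ℓ : ℤ)) • ((φ u : Fin g → ℤ))))
               (x - iota ((2 * (ℓ : ℤ)) • ((φ u : Fin g → ℤ)))))}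

/-- A subset `Δ ⊆ X_ℝ` is integral: a bounded convex polytope equal to the convex hull
of `Δ ∩ X`, symmetric about `0`, containing `0`, with `Δ ∩ X` containing a ℤ-basis. -/
def IsIntegral {g : ℕ} (Δ : Set (Fin g → ℝ)) : Prop :=
  Bornology.IsBounded Δ ∧
  Δ = convexHull ℝ (Δ ∩ Set.range (iota (g := g))) ∧
  Δ = -Δ ∧ (0 : Fin g → ℝ) ∈ Δ ∧
  ∃ b : Module.Basis (Fin g) ℤ (Fin g → ℤ), ∀ i, iota (b i) ∈ Δ

/-- `Σ_ℓ^α = (α + 2ℓφ(X^∨)) ∩ Σ_ℓ`. -/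
def SigmaAlpha {g : ℕ} {Y : Submodule ℤ (Fin g → ℤ)}
    (φ : ((Fin g → ℤ) →ₗ[ℤ] ℤ) → Y) (ℓ : ℕ) (α : Fin g → ℤ) : Set (Fin g → ℤ) :=
  {β | β ∈ SigmaL φ ℓ ∧ ∃ u : (Fin g → ℤ) →ₗ[ℤ] ℤ, β = α + (2 * (ℓ : ℤ)) • ((φ u : Fin g → ℤ))}

/-- The convex cone generated by a set `S` (the set of all nonnegative combinations). -/
def conicHull {M : Type*} [AddCommMonoid M] [Module ℝ M] (S : Set M) : Set M :=
  {y | ∃ (n : ℕ) (c : Fin n → ℝ) (v : Fin n → M),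
    (∀ i, 0 ≤ c i) ∧ (∀ i, v i ∈ S) ∧ y = ∑ i, c i • v i}

/-- `Cone(C_ℓ^β)`: the convex cone in `X_ℝ` generated by `{γ − β : γ ∈ Σ_ℓ}`. -/
def coneC {g : ℕ} {Y : Submodule ℤ (Fin g → ℤ)}
    (φ : ((Fin g → ℤ) →ₗ[ℤ] ℤ) → Y) (ℓ : ℕ) (β : Fin g → ℤ) : Set (Fin g → ℝ) :=
  conicHull {w | ∃ γ ∈ SigmaL φ ℓ, w = iota (γ - β)}


/-- The ℝ-linear extension of an integral linear functional, as an ℝ-linear map. -/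
noncomputable def extL {g : ℕ} (u : (Fin g → ℤ) →ₗ[ℤ] ℤ) : (Fin g → ℝ) →ₗ[ℝ] ℝ :=
  ∑ i, (u (Pi.single i 1) : ℝ) • (LinearMap.proj i : (Fin g → ℝ) →ₗ[ℝ] ℝ)


section Lattice

variable {g : ℕ}

@[simp]
lemma iota_zero : iota (0 : Fin g → ℤ) = 0 := by
  funext i; simp [iota]

lemma iota_add (x y : Fin g → ℤ) : iota (x + y) = iota x + iota y := by
  funext i; simp [iota]

lemma iota_neg (x : Fin g → ℤ) : iota (-x) = -iota x := by
  funext i; simp [iota]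

lemma iota_smul (c : ℤ) (x : Fin g → ℤ) : iota (c • x) = (c : ℝ) • iota x := by
  funext i; simp [iota]

lemma iota_single (i : Fin g) : iota (Pi.single i 1) = Pi.single i 1 := by
  funext j; simp [iota, Pi.single_apply]

def iotaLinear : (Fin g → ℤ) →ₗ[ℤ] (Fin g → ℝ) where
  toFun := iota
  map_add' := iota_add
  map_smul' c x := by funext i; simp [iota]

lemma extL_iota (u : (Fin g → ℤ) →ₗ[ℤ] ℤ) (x : Fin g → ℤ) : extL u (iota x) = u x := by
  have hsingle (i : Fin g) : (fun j => if i = j then (1 : ℤ) else 0) = Pi.single i 1 := by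
    funext j; simp [Pi.single_apply, eq_comm]
  simp [LinearMap.pi_apply_eq_sum_univ u x, hsingle, extL, LinearMap.sum_apply, iota, mul_comm]

lemma linearMap_ext_iota_basis {M : Type*} [AddCommGroup M] [Module ℝ M]
    {f f' : (Fin g → ℝ) →ₗ[ℝ] M} (b : Module.Basis (Fin g) ℤ (Fin g → ℤ))
    (h : ∀ i, f (iota (b i)) = f' (iota (b i))) : f = f' := by
  have hX : (f.restrictScalars ℤ).comp iotaLinear = (f'.restrictScalars ℤ).comp iotaLinear :=
    b.ext h
  refine (Pi.basisFun ℝ (Fin g)).ext fun i => ?_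
  simpa [iotaLinear, iota_single] using LinearMap.congr_fun hX (Pi.single i 1)

end Lattice

section Polarization

variable {g : ℕ} {Y : Submodule ℤ (Fin g → ℤ)} {B : Y →ₗ[ℤ] (Fin g → ℤ) →ₗ[ℤ] ℤ} {N : ℕ}
  {φ : ((Fin g → ℤ) →ₗ[ℤ] ℤ) → Y}

lemma injective_of_pos (hBpos : ∀ y : Y, y ≠ 0 → 0 < B y (y : Fin g → ℤ)) :
    Function.Injective B := by
  refine (injective_iff_map_eq_zero B).mpr fun y hy => by_contra fun hne => ?_
  simpa [hy] using hBpos y hne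

lemma phi_zero (hinj : Function.Injective B)
    (hφ : ∀ u : (Fin g → ℤ) →ₗ[ℤ] ℤ, B (φ u) = (N : ℤ) • u) : φ 0 = 0 :=
  hinj (by rw [map_zero, hφ, smul_zero])

lemma phi_neg (hinj : Function.Injective B)
    (hφ : ∀ u : (Fin g → ℤ) →ₗ[ℤ] ℤ, B (φ u) = (N : ℤ) • u) (w : (Fin g → ℤ) →ₗ[ℤ] ℤ) :
    φ (-w) = -φ w :=
  hinj (by rw [map_neg, hφ, hφ, smul_neg])

lemma phi_sub (hinj : Function.Injective B)
    (hφ : ∀ u : (Fin g → ℤ) →ₗ[ℤ] ℤ, B (φ u) = (N : ℤ) • u) (v w : (Fin g → ℤ) →ₗ[ℤ] ℤ) :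
    φ (v - w) = φ v - φ w :=
  hinj (by rw [map_sub, hφ, hφ, hφ, smul_sub])

lemma apply_phi_comm (hBsymm : ∀ y z : Y, B y (z : Fin g → ℤ) = B z (y : Fin g → ℤ))
    (hφ : ∀ u : (Fin g → ℤ) →ₗ[ℤ] ℤ, B (φ u) = (N : ℤ) • u) (hN : N ≠ 0)
    (v w : (Fin g → ℤ) →ₗ[ℤ] ℤ) : v (φ w : Fin g → ℤ) = w (φ v : Fin g → ℤ) := by
  simpa [hφ, hN] using hBsymm (φ v) (φ w)

lemma El_neg (hinj : Function.Injective B)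
    (hφ : ∀ u : (Fin g → ℤ) →ₗ[ℤ] ℤ, B (φ u) = (N : ℤ) • u) (ℓ : ℕ)
    (w : (Fin g → ℤ) →ₗ[ℤ] ℤ) : El φ ℓ (-w) = El φ ℓ w := by
  simp [El, phi_neg hinj hφ]

lemma El_sub (hinj : Function.Injective B)
    (hBsymm : ∀ y z : Y, B y (z : Fin g → ℤ) = B z (y : Fin g → ℤ))
    (hφ : ∀ u : (Fin g → ℤ) →ₗ[ℤ] ℤ, B (φ u) = (N : ℤ) • u) (hN : N ≠ 0) (ℓ : ℕ)
    (v w : (Fin g → ℤ) →ₗ[ℤ] ℤ) :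
    El φ ℓ (v - w) = El φ ℓ v + El φ ℓ w - 2 * ℓ * w (φ v : Fin g → ℤ) := by
  simp only [El, phi_sub hinj hφ, Submodule.coe_sub, map_sub, LinearMap.sub_apply,
    apply_phi_comm hBsymm hφ hN v w]
  ring

lemma neg_mem_SigmaL (hinj : Function.Injective B)
    (hφ : ∀ u : (Fin g → ℤ) →ₗ[ℤ] ℤ, B (φ u) = (N : ℤ) • u) {ℓ : ℕ} {α : Fin g → ℤ}
    (hα : α ∈ SigmaL φ ℓ) : -α ∈ SigmaL φ ℓ := fun w => by
  simpa [El_neg hinj hφ] using hα (-w)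

lemma sub_two_ell_phi_mem_SigmaL (hinj : Function.Injective B)
    (hBsymm : ∀ y z : Y, B y (z : Fin g → ℤ) = B z (y : Fin g → ℤ))
    (hφ : ∀ u : (Fin g → ℤ) →ₗ[ℤ] ℤ, B (φ u) = (N : ℤ) • u) (hN : N ≠ 0) {ℓ : ℕ}
    {x : Fin g → ℤ} {z : (Fin g → ℤ) →ₗ[ℤ] ℤ}
    (hmin : ∀ w : (Fin g → ℤ) →ₗ[ℤ] ℤ, El φ ℓ z - z x ≤ El φ ℓ w - w x) :
    x - (2 * (ℓ : ℤ)) • (φ z : Fin g → ℤ) ∈ SigmaL φ ℓ := fun w => by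
  have h := hmin (z - w)
  rw [El_sub hinj hBsymm hφ hN] at h
  simp only [LinearMap.sub_apply] at h
  simp only [map_sub, map_smul, smul_eq_mul]
  linarith

lemma El_sub_apply_le (hinj : Function.Injective B)
    (hBsymm : ∀ y z : Y, B y (z : Fin g → ℤ) = B z (y : Fin g → ℤ))
    (hφ : ∀ u : (Fin g → ℤ) →ₗ[ℤ] ℤ, B (φ u) = (N : ℤ) • u) (hN : N ≠ 0) {ℓ : ℕ}
    {D : (Fin g → ℤ) → ℤ}
    (hD : ∀ γ ∈ SigmaL φ ℓ, ∀ z : (Fin g → ℤ) →ₗ[ℤ] ℤ,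
      D (γ + (2 * (ℓ : ℤ)) • ((φ z : Fin g → ℤ))) = El φ ℓ z + z γ)
    {γ : Fin g → ℤ} (hγ : γ ∈ SigmaL φ ℓ) (z u : (Fin g → ℤ) →ₗ[ℤ] ℤ) :
    El φ ℓ u - u ((2 * (ℓ : ℤ)) • (φ u : Fin g → ℤ)) ≤
      D (γ + (2 * (ℓ : ℤ)) • (φ z : Fin g → ℤ)) - u (γ + (2 * (ℓ : ℤ)) • (φ z : Fin g → ℤ)) := by
  have h := hγ (z - u)
  rw [El_sub hinj hBsymm hφ hN] at h
  simp only [LinearMap.sub_apply] at h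
  simp only [hD γ hγ z, map_add, map_smul, smul_eq_mul]
  unfold El at h ⊢
  linarith

lemma apply_iota_eq_neg_of_forall_le (hinj : Function.Injective B)
    (hφ : ∀ u : (Fin g → ℤ) →ₗ[ℤ] ℤ, B (φ u) = (N : ℤ) • u) {ℓ : ℕ} {D : (Fin g → ℤ) → ℤ}
    (hD : ∀ γ ∈ SigmaL φ ℓ, ∀ z : (Fin g → ℤ) →ₗ[ℤ] ℤ,
      D (γ + (2 * (ℓ : ℤ)) • ((φ z : Fin g → ℤ))) = El φ ℓ z + z γ)
    {u : (Fin g → ℤ) →ₗ[ℤ] ℤ} {z : (Fin g → ℝ) →ₗ[ℝ] ℝ}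
    (hz : ∀ x : Fin g → ℤ,
      (El φ ℓ u : ℝ) + z (iota ((2 * (ℓ : ℤ)) • (φ u : Fin g → ℤ))) ≤ (D x : ℝ) + z (iota x))
    {γ : Fin g → ℤ} (hγ : γ ∈ SigmaL φ ℓ) : z (iota γ) = -u γ := by
  have hge {γ : Fin g → ℤ} (hγ : γ ∈ SigmaL φ ℓ) : 0 ≤ (u γ : ℝ) + z (iota γ) := by
    have h := hz (γ + (2 * (ℓ : ℤ)) • (φ u : Fin g → ℤ))
    rw [hD γ hγ u, iota_add, map_add] at h
    push_cast at h
    linarith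
  have hle := hge (neg_mem_SigmaL hinj hφ hγ)
  rw [iota_neg, map_neg, map_neg, Int.cast_neg] at hle
  linarith [hge hγ]

end Polarization

section QuadraticForm

variable {g : ℕ} {Y : Submodule ℤ (Fin g → ℤ)} {B : Y →ₗ[ℤ] (Fin g → ℤ) →ₗ[ℤ] ℤ} {N : ℕ}
  {φ : ((Fin g → ℤ) →ₗ[ℤ] ℤ) → Y} {Bb : (Fin g → ℝ) →ₗ[ℝ] (Fin g → ℝ) →ₗ[ℝ] ℝ}

lemma Bb_sub_two_ell_phi (hφ : ∀ u : (Fin g → ℤ) →ₗ[ℤ] ℤ, B (φ u) = (N : ℤ) • u)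
    (hBbsymm : ∀ x y : Fin g → ℝ, Bb x y = Bb y x)
    (hBbcompat : ∀ (y : Y) (x : Fin g → ℤ), Bb (iota (y : Fin g → ℤ)) (iota x) = (B y x : ℝ))
    (ℓ : ℕ) (x : Fin g → ℤ) (z : (Fin g → ℤ) →ₗ[ℤ] ℤ) :
    Bb (iota x - iota ((2 * (ℓ : ℤ)) • (φ z : Fin g → ℤ)))
        (iota x - iota ((2 * (ℓ : ℤ)) • (φ z : Fin g → ℤ))) =
      Bb (iota x) (iota x) + 4 * ℓ * N * ((El φ ℓ z : ℝ) - z x) := by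
  have hphi (x' : Fin g → ℤ) : Bb (iota (φ z : Fin g → ℤ)) (iota x') = N * z x' := by
    simp [hBbcompat, hφ]
  have hphi' : Bb (iota x) (iota (φ z : Fin g → ℤ)) = N * z x := by rw [hBbsymm, hphi]
  simp only [iota_smul, map_sub, map_smul, LinearMap.sub_apply, LinearMap.smul_apply,
    smul_eq_mul, hphi, hphi', El]
  push_cast
  ring

lemma mem_SigmaL_of_iota_mem_VorP (hinj : Function.Injective B)
    (hφ : ∀ u : (Fin g → ℤ) →ₗ[ℤ] ℤ, B (φ u) = (N : ℤ) • u) (hN : 0 < N)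
    (hBbsymm : ∀ x y : Fin g → ℝ, Bb x y = Bb y x) (hBbnonneg : ∀ x : Fin g → ℝ, 0 ≤ Bb x x)
    (hBbcompat : ∀ (y : Y) (x : Fin g → ℤ), Bb (iota (y : Fin g → ℤ)) (iota x) = (B y x : ℝ))
    {ℓ : ℕ} (hℓ : 0 < ℓ) {α : Fin g → ℤ} (hα : iota α ∈ VorP Bb φ ℓ 0) :
    α ∈ SigmaL φ ℓ := by
  intro w
  have h := hα (-w)
  simp only [phi_zero hinj hφ, Submodule.coe_zero, smul_zero, iota_zero, sub_zero] at h
  rw [Real.sqrt_le_sqrt_iff (hBbnonneg _), Bb_sub_two_ell_phi hφ hBbsymm hBbcompat,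
    El_neg hinj hφ, LinearMap.neg_apply, Int.cast_neg] at h
  have hcoef : (0 : ℝ) < 4 * ℓ * N := by positivity
  have : (0 : ℝ) ≤ El φ ℓ w + w α := by nlinarith
  exact_mod_cast this

lemma exists_le_El_sub_apply (hφ : ∀ u : (Fin g → ℤ) →ₗ[ℤ] ℤ, B (φ u) = (N : ℤ) • u)
    (hN : 0 < N) (hBbsymm : ∀ x y : Fin g → ℝ, Bb x y = Bb y x)
    (hBbnonneg : ∀ x : Fin g → ℝ, 0 ≤ Bb x x)
    (hBbcompat : ∀ (y : Y) (x : Fin g → ℤ), Bb (iota (y : Fin g → ℤ)) (iota x) = (B y x : ℝ))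
    {ℓ : ℕ} (hℓ : 0 < ℓ) (x : Fin g → ℤ) :
    ∃ b : ℤ, ∀ z : (Fin g → ℤ) →ₗ[ℤ] ℤ, b ≤ El φ ℓ z - z x := by
  refine ⟨⌊-Bb (iota x) (iota x)⌋, fun z => ?_⟩
  have h := hBbnonneg (iota x - iota ((2 * (ℓ : ℤ)) • (φ z : Fin g → ℤ)))
  rw [Bb_sub_two_ell_phi hφ hBbsymm hBbcompat] at h
  have hcoef : (1 : ℝ) ≤ 4 * ℓ * N := by
    have : (1 : ℝ) ≤ ℓ := by exact_mod_cast hℓ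
    have : (1 : ℝ) ≤ N := by exact_mod_cast hN
    nlinarith
  have : -Bb (iota x) (iota x) ≤ ((El φ ℓ z - z x : ℤ) : ℝ) := by
    push_cast
    rcases le_or_gt 0 ((El φ ℓ z : ℝ) - z x) with hd | hd
    · linarith [hBbnonneg (iota x)]
    · nlinarith
  exact_mod_cast (Int.floor_le _).trans this

lemma exists_mem_SigmaL_add_two_ell_phi (hinj : Function.Injective B)
    (hBsymm : ∀ y z : Y, B y (z : Fin g → ℤ) = B z (y : Fin g → ℤ))
    (hφ : ∀ u : (Fin g → ℤ) →ₗ[ℤ] ℤ, B (φ u) = (N : ℤ) • u) (hN : 0 < N)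
    (hBbsymm : ∀ x y : Fin g → ℝ, Bb x y = Bb y x) (hBbnonneg : ∀ x : Fin g → ℝ, 0 ≤ Bb x x)
    (hBbcompat : ∀ (y : Y) (x : Fin g → ℤ), Bb (iota (y : Fin g → ℤ)) (iota x) = (B y x : ℝ))
    {ℓ : ℕ} (hℓ : 0 < ℓ) (x : Fin g → ℤ) :
    ∃ γ ∈ SigmaL φ ℓ, ∃ z : (Fin g → ℤ) →ₗ[ℤ] ℤ, x = γ + (2 * (ℓ : ℤ)) • (φ z : Fin g → ℤ) := by
  obtain ⟨b, hb⟩ := exists_le_El_sub_apply hφ hN hBbsymm hBbnonneg hBbcompat hℓ x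
  obtain ⟨_, ⟨z, rfl⟩, hmin⟩ := Int.exists_least_of_bdd
    (P := fun n => ∃ z : (Fin g → ℤ) →ₗ[ℤ] ℤ, El φ ℓ z - z x = n)
    ⟨b, by rintro _ ⟨z, rfl⟩; exact hb z⟩ ⟨_, 0, rfl⟩
  exact ⟨_, sub_two_ell_phi_mem_SigmaL hinj hBsymm hφ hN.ne' fun w => hmin _ ⟨w, rfl⟩, z,
    (sub_add_cancel _ _).symm⟩

end QuadraticForm

theorem statement16_general
    (g : ℕ)
    (Y : Submodule ℤ (Fin g → ℤ))
    (B : Y →ₗ[ℤ] (Fin g → ℤ) →ₗ[ℤ] ℤ)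
    (hBsymm : ∀ y z : Y, B y (z : Fin g → ℤ) = B z (y : Fin g → ℤ))
    (hBpos : ∀ y : Y, y ≠ 0 → 0 < B y (y : Fin g → ℤ))
    (N : ℕ) (hNpos : 0 < N)
    (φ : ((Fin g → ℤ) →ₗ[ℤ] ℤ) → Y)
    (hφ : ∀ u : (Fin g → ℤ) →ₗ[ℤ] ℤ, B (φ u) = (N : ℤ) • u)
    (Bb : (Fin g → ℝ) →ₗ[ℝ] (Fin g → ℝ) →ₗ[ℝ] ℝ)
    (hBbsymm : ∀ x y : Fin g → ℝ, Bb x y = Bb y x)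
    (hBbpos : ∀ x : Fin g → ℝ, x ≠ 0 → 0 < Bb x x)
    (hBbcompat : ∀ (y : Y) (x : Fin g → ℤ), Bb (iota (y : Fin g → ℤ)) (iota x) = (B y x : ℝ))
    (ℓ : ℕ) (hℓ : 0 < ℓ)
    (D : (Fin g → ℤ) → ℤ)
    (hD : ∀ γ ∈ SigmaL φ ℓ, ∀ z : (Fin g → ℤ) →ₗ[ℤ] ℤ,
      D (γ + (2 * (ℓ : ℤ)) • ((φ z : Fin g → ℤ))) = El φ ℓ z + z γ)
    (hint : IsIntegral (VorP Bb φ ℓ 0))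
    (u : (Fin g → ℤ) →ₗ[ℤ] ℤ) :
    {z : (Fin g → ℝ) →ₗ[ℝ] ℝ | ∀ x : Fin g → ℤ,
        (El φ ℓ u : ℝ) + z (iota ((2 * (ℓ : ℤ)) • ((φ u : Fin g → ℤ)))) ≤
          (D x : ℝ) + z (iota x)} = {-(extL u)} := by
  have hinj := injective_of_pos hBpos
  have hBbnonneg (x : Fin g → ℝ) : 0 ≤ Bb x x := by
    rcases eq_or_ne x 0 with rfl | hx
    · simp
    · exact (hBbpos x hx).le
  ext z
  constructor
  · intro hz
    obtain ⟨-, -, -, -, b, hb⟩ := hint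
    refine linearMap_ext_iota_basis b fun i => ?_
    have hbi := mem_SigmaL_of_iota_mem_VorP hinj hφ hNpos hBbsymm hBbnonneg hBbcompat hℓ (hb i)
    rw [apply_iota_eq_neg_of_forall_le hinj hφ hD hz hbi, LinearMap.neg_apply, extL_iota]
  · rintro rfl x
    obtain ⟨γ, hγ, w, rfl⟩ :=
      exists_mem_SigmaL_add_two_ell_phi hinj hBsymm hφ hNpos hBbsymm hBbnonneg hBbcompat hℓ x
    have h := Int.cast_le (R := ℝ) |>.mpr (El_sub_apply_le hinj hBsymm hφ hNpos.ne' hD hγ w u)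
    simp only [LinearMap.neg_apply, extL_iota]
    push_cast at h
    linarith

/-- if `Σ_ℓ(0)` is integral then for `u ∈ X^∨`, the set of real linear
functionals `z` with `D_ℓ(x) + z(x) ≥ E_ℓ(u) + z(2ℓφ(u))` for all `x ∈ X` is exactly
`{−u}` (with `u` extended ℝ-linearly). -/
theorem statement16
    (g : ℕ) (hg : 1 ≤ g)
    (Y : Submodule ℤ (Fin g → ℤ))
    (hYfin : Y.toAddSubgroup.index ≠ 0)
    (B : Y →ₗ[ℤ] (Fin g → ℤ) →ₗ[ℤ] ℤ)
    (hBsymm : ∀ y z : Y, B y (z : Fin g → ℤ) = B z (y : Fin g → ℤ))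
    (hBpos : ∀ y : Y, y ≠ 0 → 0 < B y (y : Fin g → ℤ))
    (N : ℕ) (hN : N = (LinearMap.range B).toAddSubgroup.index) (hNpos : 0 < N)
    (φ : ((Fin g → ℤ) →ₗ[ℤ] ℤ) → Y)
    (hφ : ∀ u : (Fin g → ℤ) →ₗ[ℤ] ℤ, B (φ u) = (N : ℤ) • u)
    (Bb : (Fin g → ℝ) →ₗ[ℝ] (Fin g → ℝ) →ₗ[ℝ] ℝ)
    (hBbsymm : ∀ x y : Fin g → ℝ, Bb x y = Bb y x)
    (hBbpos : ∀ x : Fin g → ℝ, x ≠ 0 → 0 < Bb x x)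
    (hBbcompat : ∀ (y : Y) (x : Fin g → ℤ), Bb (iota (y : Fin g → ℤ)) (iota x) = (B y x : ℝ))
    (ℓ : ℕ) (hℓ : 0 < ℓ)
    (D : (Fin g → ℤ) → ℤ)
    (hD : ∀ γ ∈ SigmaL φ ℓ, ∀ z : (Fin g → ℤ) →ₗ[ℤ] ℤ,
      D (γ + (2 * (ℓ : ℤ)) • ((φ z : Fin g → ℤ))) = El φ ℓ z + z γ)
    (hint : IsIntegral (VorP Bb φ ℓ 0))
    (u : (Fin g → ℤ) →ₗ[ℤ] ℤ) :
    {z : (Fin g → ℝ) →ₗ[ℝ] ℝ | ∀ x : Fin g → ℤ,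
        (El φ ℓ u : ℝ) + z (iota ((2 * (ℓ : ℤ)) • ((φ u : Fin g → ℤ)))) ≤
          (D x : ℝ) + z (iota x)} = {-(extL u)} :=
  statement16_general g Y B hBsymm hBpos N hNpos φ hφ Bb hBbsymm hBbpos hBbcompat ℓ hℓ D hD hint u

end NFC
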